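/- Let k1, k2 ≥ 1 and let C1, C2 : Matrix (Fin k1) (Fin k2) ℝ. If P is a potential function of the bi-matrix game (C1, C2), then there exists λ ∈ ℝ such that P i j = C1 i j + (C2 (k1−1) j − C1 (k1−1) j) + λ for all i : Fin k1 and j : Fin k2 (where k1−1 denotes the last row index). In other words, every potential function of (C1, C2) has this form. -/
import Mathlib

theorem stmt2 (k1 k2 : ℕ) (hk1 : 1 ≤ k1) (hk2 : 1 ≤ k2)
    (C1 C2 P : Matrix (Fin k1) (Fin k2) ℝ)
    (hP1 : ∀ i i' : Fin k1, ∀ j : Fin k2, C1 i j - C1 i' j = P i j - P i' j)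
    (hP2 : ∀ i : Fin k1, ∀ j j' : Fin k2, C2 i j - C2 i j' = P i j - P i j') :
    ∃ lam : ℝ, ∀ (i : Fin k1) (j : Fin k2),
      P i j = C1 i j + (C2 ⟨k1 - 1, by omega⟩ j - C1 ⟨k1 - 1, by omega⟩ j) + lam := by
  set e : Fin k1 := ⟨k1 - 1, by omega⟩
  set j0 : Fin k2 := ⟨0, by omega⟩
  refine ⟨P e j0 - C2 e j0, fun i j => ?_⟩
  have h1 := hP1 i e j
  have h2 := hP2 e j j0
  linarith
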